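/- Let r, t be nonnegative integers and n ≥ r+t+1, and let ρ also denote the automorphism of Z T_{r,t,t} induced by the order-two graph automorphism of T_{r,t,t} exchanging its two legs of length t. Then there is an isomorphism of stable translation quivers Γ^{n+3}_{r,t,t} ≅ Z T_{r,t,t}/⟨τ^{-(n+3)} ρ^{n+3}⟩; in particular the twist by ρ occurs exactly when the polygon has an odd number of sides. -/

import Mathlib

/-!
Coloured oriented single and paired diagonals in a regular polygon, following
L. Lamberti, "Combinatorial model for the cluster categories of type E".

The vertices of the regular `m`-gon `Π` are labelled by `ZMod m` (clockwise).
A coloured oriented diagonal `[i,j]_c` is encoded by the structure `Diag`;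
the colour `P` encodes a *paired* diagonal `[i,j]_P = {[i,j]_R, [j,i]_B}`.
-/

inductive Colour : Type
  | R : Colour
  | B : Colour
  | P : Colour
deriving DecidableEq

/-- A coloured oriented (single or paired) diagonal `[i,j]_c` of the regular
`m`-gon (for `m = 0` we interpret `ZMod 0 = ℤ` as the infinite-sided polygon). -/
structure Diag (m : ℕ) where
  i : ZMod m
  j : ZMod m
  c : Colour
deriving DecidableEq

/-- The simultaneous change of colour and orientation:
`ρ([i,j]_R) = [j,i]_B`, `ρ([i,j]_B) = [j,i]_R`, `ρ([i,j]_P) = [i,j]_P`. -/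
def rho {m : ℕ} : Diag m → Diag m
  | ⟨i, j, Colour.R⟩ => ⟨j, i, Colour.B⟩
  | ⟨i, j, Colour.B⟩ => ⟨j, i, Colour.R⟩
  | ⟨i, j, Colour.P⟩ => ⟨i, j, Colour.P⟩

/-- The anticlockwise rotation `[i,j]_c ↦ [i-1,j-1]_c`. -/
def shiftD {m : ℕ} (d : Diag m) : Diag m := ⟨d.i - 1, d.j - 1, d.c⟩

/-- The slice of `Π_{r,s,t}` based at the vertex `i` of `Π`:
the paired diagonals `[i,i+2]_P, …, [i,i+r+2]_P`, the red single diagonals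
`[i,i+r+3]_R, …, [i,i+r+s+2]_R` and the blue single diagonals
`[i+r+3,i]_B, …, [i+r+t+2,i]_B`. -/
def PiSetAt (r s t : ℕ) {m : ℕ} (i : ZMod m) : Set (Diag m) :=
  {d | (∃ k : ℕ, 2 ≤ k ∧ k ≤ r + 2 ∧ d = ⟨i, i + (k : ZMod m), Colour.P⟩) ∨
       (∃ k : ℕ, r + 3 ≤ k ∧ k ≤ r + s + 2 ∧ d = ⟨i, i + (k : ZMod m), Colour.R⟩) ∨
       (∃ k : ℕ, r + 3 ≤ k ∧ k ≤ r + t + 2 ∧ d = ⟨i + (k : ZMod m), i, Colour.B⟩)}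

/-- The set `Π_{r,s,t}` of coloured oriented single and paired diagonals of the
regular `m`-gon associated to the tree `T_{r,s,t}`. -/
def PiSet (r s t m : ℕ) : Set (Diag m) := ⋃ i : ZMod m, PiSetAt r s t i

open Classical in
/-- The translation `τ` on coloured oriented diagonals: the anticlockwise
rotation `[i,j]_c ↦ [i-1,j-1]_c`, composed with `ρ^{m}` on the first slice
`Π_{r,s,t}|_1` when the tree is symmetric (`s = t`). -/
noncomputable def tauD (r s t : ℕ) {m : ℕ} (d : Diag m) : Diag m :=
  if s = t ∧ d ∈ PiSetAt r s t (1 : ZMod m) then rho^[m] (shiftD d) else shiftD d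

/-- Minimal clockwise rotations (before the colour adjustment at the seam):
`[k,l]_c → [k,l+1]_c`, `[k,l]_c → [k+1,l]_c`, together with
`[k,k+r+2]_P → [k,k+r+3]_R`, `[k,k+r+2]_P → [k+r+3,k]_B`,
`[k,k+r+3]_R → [k+1,k+r+3]_P` and `[k+r+3,k]_B → [k+1,k+r+3]_P`. -/
def Rot (r : ℕ) {m : ℕ} (a b : Diag m) : Prop :=
  b = ⟨a.i, a.j + 1, a.c⟩ ∨ b = ⟨a.i + 1, a.j, a.c⟩ ∨
  (∃ k : ZMod m, a = ⟨k, k + ((r : ZMod m) + 2), Colour.P⟩ ∧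
    (b = ⟨k, k + ((r : ZMod m) + 3), Colour.R⟩ ∨
     b = ⟨k + ((r : ZMod m) + 3), k, Colour.B⟩)) ∨
  (∃ k : ZMod m,
    (a = ⟨k, k + ((r : ZMod m) + 3), Colour.R⟩ ∨
     a = ⟨k + ((r : ZMod m) + 3), k, Colour.B⟩) ∧
    b = ⟨k + 1, k + ((r : ZMod m) + 3), Colour.P⟩)

/-- In the symmetric case `s = t` with an odd-sided polygon, the arrows whose
source lies in `τ(Π_{r,t,t}|_1)` and whose (unadjusted) target lies in the
first slice `Π_{r,t,t}|_1` additionally change colour and orientation. -/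
def SeamTwist (r s t m : ℕ) (a b₀ : Diag m) : Prop :=
  s = t ∧ Odd m ∧ a ∈ (tauD r s t) '' (PiSetAt r s t (1 : ZMod m)) ∧
    b₀ ∈ PiSetAt r s t (1 : ZMod m)

/-- The arrows of the quiver `Γ^{m}_{r,s,t}`: minimal clockwise rotations
between elements of `Π_{r,s,t}`, adjusted by `ρ` at the seam. -/
def ArrowD (r s t m : ℕ) (a b : Diag m) : Prop :=
  a ∈ PiSet r s t m ∧ b ∈ PiSet r s t m ∧
    ∃ b₀, Rot r a b₀ ∧
      ((SeamTwist r s t m a b₀ ∧ b = rho b₀) ∨ (¬ SeamTwist r s t m a b₀ ∧ b = b₀))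

/-- The vertices of the tree `T_{r,s,t}`: a central vertex together with three
legs having `r`, `s`, `t` vertices respectively. -/
inductive TVert (r s t : ℕ) : Type
  | center : TVert r s t
  | legA : Fin r → TVert r s t
  | legB : Fin s → TVert r s t
  | legC : Fin t → TVert r s t
deriving DecidableEq

/-- An orientation of the tree `T_{r,s,t}`: the `A`-leg points towards the
centre, the `B`- and `C`-legs point away from it. -/
def TArrow {r s t : ℕ} (x y : TVert r s t) : Prop :=
  (∃ k l : Fin r, (l : ℕ) + 1 = (k : ℕ) ∧ x = TVert.legA k ∧ y = TVert.legA l) ∨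
  (∃ k : Fin r, (k : ℕ) = 0 ∧ x = TVert.legA k ∧ y = TVert.center) ∨
  (∃ k : Fin s, (k : ℕ) = 0 ∧ x = TVert.center ∧ y = TVert.legB k) ∨
  (∃ k l : Fin s, (k : ℕ) + 1 = (l : ℕ) ∧ x = TVert.legB k ∧ y = TVert.legB l) ∨
  (∃ k : Fin t, (k : ℕ) = 0 ∧ x = TVert.center ∧ y = TVert.legC k) ∨
  (∃ k l : Fin t, (k : ℕ) + 1 = (l : ℕ) ∧ x = TVert.legC k ∧ y = TVert.legC l)

/-- The order-two graph automorphism of a symmetric tree `T_{r,t,t}`,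
exchanging its two legs of length `t`. -/
def treeRho {r t : ℕ} : TVert r t t → TVert r t t
  | TVert.center => TVert.center
  | TVert.legA k => TVert.legA k
  | TVert.legB k => TVert.legC k
  | TVert.legC k => TVert.legB k

/-- `treeRho` as a permutation. -/
def treeRhoPerm (r t : ℕ) : Equiv.Perm (TVert r t t) :=
  Function.Involutive.toPerm treeRho (by intro x; cases x <;> rfl)

/-- The translation of the repetitive quiver `ℤQ`: `τ(m,i) = (m-1,i)`. -/
def ZTau {V : Type} (x : ℤ × V) : ℤ × V := (x.1 - 1, x.2)

/-- The arrows of the repetitive quiver `ℤQ` of a quiver with arrow relation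
`A`: for each arrow `i → j` of `Q` there are arrows `(m,i) → (m,j)` and
`(m,j) → (m+1,i)`. -/
def ZArrow {V : Type} (A : V → V → Prop) (x y : ℤ × V) : Prop :=
  (y.1 = x.1 ∧ A x.2 y.2) ∨ (y.1 = x.1 + 1 ∧ A y.2 x.2)

/-- The automorphism `τ^{-m} σ` of `ℤQ` given by shifting `m` steps to the
right and applying the graph automorphism `σ` of `Q`. -/
def shiftPerm {V : Type} (m : ℕ) (σ : Equiv.Perm V) : Equiv.Perm (ℤ × V) :=
  (Equiv.addRight (m : ℤ)).prodCongr σ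

/-- `φ` exhibits the quiver `Γ^{m}_{r,s,t}` (with vertex set `PiSet r s t m`,
arrow relation `ArrowD` and translation `tauD`) as the quotient of the
repetitive quiver `ℤQ` (with arrow relation `ZArrow A` and translation `ZTau`)
by the cyclic group generated by the automorphism `g`, as stable translation
quivers: `φ` is surjective onto the vertex set, its fibres are exactly the
`g`-orbits, it commutes with the translations, and the arrows of
`Γ^{m}_{r,s,t}` correspond exactly to the `g`-orbits of arrows of `ℤQ`. -/
def IsQuotientIso (r s t m : ℕ) {V : Type} (A : V → V → Prop)
    (g : Equiv.Perm (ℤ × V)) (φ : ℤ × V → Diag m) : Prop :=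
  (∀ x, φ x ∈ PiSet r s t m) ∧
  (∀ d ∈ PiSet r s t m, ∃ x, φ x = d) ∧
  (∀ x y, φ x = φ y ↔ ∃ k : ℤ, (g ^ k) x = y) ∧
  (∀ x, φ (ZTau x) = tauD r s t (φ x)) ∧
  (∀ x y, ArrowD r s t m (φ x) (φ y) ↔
    ∃ y', (∃ k : ℤ, (g ^ k) y = y') ∧ ZArrow A x y')

/-!
Each slice `Π_{r,t,t}|_i` is a copy of `T_{r,t,t}`: a tree vertex becomes the diagonal of the slice
with a prescribed length and colour, and an arrow `u → v` of the tree is exactly a one-step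
lengthening of the diagonal. Minimal rotations therefore give the arrows of `T` inside each slice
and the reversed arrows of `T` from slice `i` to slice `i + 1`, twisted by `ρ^m` when crossing from
slice `0` to slice `1`. Unrolling the slice index to `z ∈ ℤ` and untwisting the tree coordinate by
`σ^(-⌊(z-1)/m⌋)` identifies the `⟨τ^{-m} σ⟩`-orbits of `ℤT` with this slice model, for any
automorphism `σ` of the tree; here `σ = ρ^m`, which is `ρ` or `1` according to the parity of `m`
since `ρ` is an involution.
-/

open Equiv

lemma Equiv.prodCongr_zpow {α β : Type*} (σ : Perm α) (τ : Perm β) (k : ℤ) :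
    σ.prodCongr τ ^ k = (σ ^ k).prodCongr (τ ^ k) :=
  let f : Perm α × Perm β →* Perm (α × β) :=
    MonoidHom.mk' (fun p => p.1.prodCongr p.2) (fun _ _ => rfl)
  (map_zpow f (σ, τ) k).symm

lemma Equiv.Perm.zpow_apply_zpow_apply {α : Type*} (σ : Perm α) (a b : ℤ) (x : α) :
    (σ ^ a) ((σ ^ b) x) = (σ ^ (a + b)) x := by
  rw [zpow_add, Perm.mul_apply]

lemma rel_zpow_apply_iff {V : Type*} {A : V → V → Prop} {σ : Perm V}
    (hσ : ∀ u v, A (σ u) (σ v) ↔ A u v) (k : ℤ) (u v : V) :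
    A ((σ ^ k) u) ((σ ^ k) v) ↔ A u v := by
  induction k using Int.induction_on generalizing u v with
  | zero => rfl
  | succ k ih => simp only [zpow_add_one, Perm.mul_apply, ih, hσ]
  | pred k ih =>
    simp only [zpow_sub_one, Perm.mul_apply, ih]
    simpa using (hσ (σ⁻¹ u) (σ⁻¹ v)).symm

lemma Odd.pow_eq_self_of_sq_eq_one {M : Type*} [Monoid M] {a : M} {k : ℕ} (hk : Odd k)
    (ha : a ^ 2 = 1) : a ^ k = a := by
  obtain ⟨c, rfl⟩ := hk
  rw [pow_succ, pow_mul, ha, one_pow, one_mul]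

lemma Even.pow_eq_one_of_sq_eq_one {M : Type*} [Monoid M] {a : M} {k : ℕ} (hk : Even k)
    (ha : a ^ 2 = 1) : a ^ k = 1 := by
  obtain ⟨c, rfl⟩ := hk
  rw [← two_mul, pow_mul, ha, one_pow]

lemma ZMod.natCast_inj_of_lt {m a b : ℕ} (ha : a < m) (hb : b < m) :
    (a : ZMod m) = b ↔ a = b := by
  rw [ZMod.natCast_eq_natCast_iff', Nat.mod_eq_of_lt ha, Nat.mod_eq_of_lt hb]

section RepetitiveQuotient

variable {V : Type} {m : ℕ}

lemma shiftPerm_zpow_apply (σ : Perm V) (k : ℤ) (x : ℤ × V) :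
    (shiftPerm m σ ^ k) x = (x.1 + k * m, (σ ^ k) x.2) := by
  simp only [shiftPerm, prodCongr_zpow, zsmul_addRight, Int.zsmul_eq_mul, prodCongr_apply,
    coe_addRight]
  rfl

/-- `lap m z = ⌊(z - 1) / m⌋` numbers the translates `{km + 1, …, km + m}` of the fundamental
domain of the shift by `m`. -/
def lap (m : ℕ) (z : ℤ) : ℤ := (z - 1) / m

def seamExp (i : ZMod m) : ℤ := if i = 0 then 1 else 0

lemma lap_add_mul (hm : 0 < m) (z k : ℤ) : lap m (z + k * m) = lap m z + k := by
  rw [lap, lap, add_sub_right_comm, Int.add_mul_ediv_right _ _ (by omega)]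

lemma lap_add_one (hm : 0 < m) (z : ℤ) : lap m (z + 1) = lap m z + seamExp (z : ZMod m) := by
  have hm' : (0 : ℤ) < m := by exact_mod_cast hm
  have hz := Int.mul_ediv_add_emod z m
  have h0 := Int.emod_nonneg z hm'.ne'
  have h1 := Int.emod_lt_of_pos z hm'
  simp only [lap, add_sub_cancel_right, seamExp, ZMod.intCast_zmod_eq_zero_iff_dvd,
    Int.dvd_iff_emod_eq_zero]
  split_ifs with h
  · rw [((Int.ediv_emod_unique (a := z - 1) (r := m - 1) (q := z / m - 1) hm').2
      ⟨by linarith, by omega, by omega⟩).1]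
    ring
  · rw [((Int.ediv_emod_unique (a := z - 1) (r := z % m - 1) (q := z / m) hm').2
      ⟨by linarith, by omega, by omega⟩).1]
    ring

/-! The quotient `ℤQ / ⟨τ^{-m} σ⟩` realised on `ZMod m × V`: the translation and the arrows of `ℤQ`
are kept, except that crossing the seam between the copies `0` and `1` applies `σ`. -/

def sliceTau (σ : Perm V) (x : ZMod m × V) : ZMod m × V :=
  (x.1 - 1, (σ ^ seamExp (x.1 - 1)) x.2)

def SliceArrow (A : V → V → Prop) (σ : Perm V) (x y : ZMod m × V) : Prop :=
  (y.1 = x.1 ∧ A x.2 y.2) ∨ (y.1 = x.1 + 1 ∧ A ((σ ^ seamExp x.1) y.2) x.2)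

def wrap (m : ℕ) (σ : Perm V) (x : ℤ × V) : ZMod m × V :=
  (x.1, (σ ^ (-lap m x.1)) x.2)

lemma wrap_surjective (hm : 0 < m) (σ : Perm V) : Function.Surjective (wrap m σ) := by
  have : NeZero m := ⟨hm.ne'⟩
  rintro ⟨i, v⟩
  exact ⟨((i.val : ℤ), (σ ^ lap m i.val) v), by simp [wrap]⟩

lemma wrap_eq_wrap_iff (hm : 0 < m) (σ : Perm V) (x y : ℤ × V) :
    wrap m σ x = wrap m σ y ↔ ∃ k : ℤ, (shiftPerm m σ ^ k) x = y := by
  obtain ⟨z, v⟩ := x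
  obtain ⟨z', v'⟩ := y
  simp only [wrap, shiftPerm_zpow_apply, Prod.mk.injEq, ZMod.intCast_eq_intCast_iff_dvd_sub]
  constructor
  · rintro ⟨⟨k, hk⟩, hv⟩
    obtain rfl : z' = z + k * m := by linarith
    refine ⟨k, rfl, ?_⟩
    rw [lap_add_mul hm] at hv
    calc (σ ^ k) v = (σ ^ (lap m z + k)) ((σ ^ (-lap m z)) v) := by
          rw [Perm.zpow_apply_zpow_apply]; ring_nf
      _ = v' := by
          rw [hv, Perm.zpow_apply_zpow_apply, add_neg_cancel, zpow_zero, Perm.one_apply]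
  · rintro ⟨k, rfl, rfl⟩
    refine ⟨⟨k, by ring⟩, ?_⟩
    rw [lap_add_mul hm, Perm.zpow_apply_zpow_apply]
    ring_nf

lemma wrap_zTau (hm : 0 < m) (σ : Perm V) (x : ℤ × V) :
    wrap m σ (ZTau x) = sliceTau σ (wrap m σ x) := by
  obtain ⟨z, v⟩ := x
  have h := lap_add_one hm (z - 1)
  rw [sub_add_cancel] at h
  simp only [wrap, ZTau, sliceTau, Perm.zpow_apply_zpow_apply, Int.cast_sub, Int.cast_one, h]
  ring_nf

lemma sliceArrow_wrap_iff (hm : 0 < m) {A : V → V → Prop} {σ : Perm V}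
    (hσ : ∀ u v, A (σ u) (σ v) ↔ A u v) (x y : ℤ × V) :
    SliceArrow A σ (wrap m σ x) (wrap m σ y) ↔
      ∃ y', (∃ k : ℤ, (shiftPerm m σ ^ k) y = y') ∧ ZArrow A x y' := by
  simp only [← wrap_eq_wrap_iff hm]
  obtain ⟨z, v⟩ := x
  generalize wrap m σ y = p
  obtain ⟨j, w⟩ := p
  have hσ' := rel_zpow_apply_iff hσ
  constructor
  · rintro (⟨rfl, h⟩ | ⟨rfl, h⟩)
    · refine ⟨(z, (σ ^ lap m z) w), by simp [wrap], Or.inl ⟨rfl, ?_⟩⟩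
      simpa [wrap, Perm.zpow_apply_zpow_apply] using (hσ' (lap m z) _ _).2 h
    · refine ⟨(z + 1, (σ ^ lap m (z + 1)) w), by simp [wrap], Or.inr ⟨rfl, ?_⟩⟩
      simpa [wrap, Perm.zpow_apply_zpow_apply, lap_add_one hm] using (hσ' (lap m z) _ _).2 h
  · rintro ⟨⟨z', u⟩, hw, (⟨rfl, h⟩ | ⟨rfl, h⟩)⟩ <;>
      simp only [wrap, Prod.mk.injEq] at hw <;> obtain ⟨rfl, rfl⟩ := hw
    · exact Or.inl ⟨rfl, (hσ' _ _ _).2 h⟩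
    · refine Or.inr ⟨by push_cast; rfl, ?_⟩
      simpa [wrap, Perm.zpow_apply_zpow_apply, lap_add_one hm] using (hσ' (-lap m z) _ _).2 h

end RepetitiveQuotient

/-- Lengthening a diagonal of length `ℓ` and colour `c` by one step: the colour is kept, except that
the longest paired diagonal (length `r + 2`) may turn into a red or a blue one. -/
def SliceStep {α : Type*} [AddMonoidWithOne α] (r : ℕ) (ℓ : α) (c : Colour) (ℓ' : α)
    (c' : Colour) : Prop :=
  ℓ' = ℓ + 1 ∧ (c' = c ∨ (c = .P ∧ ℓ = r + 2 ∧ c' ≠ .P))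

lemma sliceStep_natCast_iff {r m ℓ ℓ' : ℕ} {c c' : Colour} (hℓ : ℓ + 1 < m) (hℓ' : ℓ' < m)
    (hr : r + 2 < m) :
    SliceStep r (ℓ : ZMod m) c (ℓ' : ZMod m) c' ↔ SliceStep r ℓ c ℓ' c' := by
  have h1 : (ℓ : ZMod m) + 1 = ((ℓ + 1 : ℕ) : ZMod m) := by push_cast; rfl
  have h2 : (r : ZMod m) + 2 = ((r + 2 : ℕ) : ZMod m) := by push_cast; rfl
  rw [SliceStep, SliceStep, h1, h2, Nat.cast_id, ZMod.natCast_inj_of_lt hℓ' hℓ,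
    ZMod.natCast_inj_of_lt (by omega) hr]

namespace TVert

variable {r s t : ℕ}

/-! In every slice, the vertex `v` of `T_{r,s,t}` is the diagonal of length `v.length` and colour
`v.colour`; the leg `A` consists of the shorter paired diagonals, read from the centre outwards. -/

def length : TVert r s t → ℕ
  | center => r + 2
  | legA a => r + 1 - a
  | legB b => r + 3 + b
  | legC c => r + 3 + c

def colour : TVert r s t → Colour
  | center => .P
  | legA _ => .P
  | legB _ => .R
  | legC _ => .B

lemma eq_of_length_colour {v w : TVert r s t} (hl : v.length = w.length)
    (hc : v.colour = w.colour) : v = w := by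
  cases v <;> cases w <;> simp_all [length, colour, Fin.ext_iff] <;> fin_omega

lemma tArrow_iff_sliceStep (v w : TVert r s t) :
    TArrow v w ↔ SliceStep r v.length v.colour w.length w.colour := by
  cases v <;> cases w <;> simp [TArrow, SliceStep, length, colour] <;> fin_omega

end TVert

section Slices

variable {r s t m : ℕ}

/-- `[i, i+ℓ]_c`, except that blue diagonals are oriented towards the base vertex: `[i+ℓ, i]_B`. -/
def diagAt (i ℓ : ZMod m) : Colour → Diag m
  | .B => ⟨i + ℓ, i, .B⟩
  | c => ⟨i, i + ℓ, c⟩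

lemma diagAt_inj {i j ℓ ℓ' : ZMod m} {c c' : Colour} :
    diagAt i ℓ c = diagAt j ℓ' c' ↔ i = j ∧ ℓ = ℓ' ∧ c = c' := by
  cases c <;> cases c' <;> simp [diagAt] <;> grind

lemma rot_diagAt_iff {i j ℓ ℓ' : ZMod m} {c c' : Colour} :
    Rot r (diagAt i ℓ c) (diagAt j ℓ' c') ↔
      (j = i ∧ SliceStep r ℓ c ℓ' c') ∨ (j = i + 1 ∧ SliceStep r ℓ' c' ℓ c) := by
  cases c <;> cases c' <;> simp [Rot, diagAt, SliceStep] <;> grind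

lemma shiftD_diagAt (i ℓ : ZMod m) (c : Colour) : shiftD (diagAt i ℓ c) = diagAt (i - 1) ℓ c := by
  cases c <;> simp [shiftD, diagAt] <;> ring

lemma rho_involutive : Function.Involutive (rho : Diag m → Diag m) := by
  rintro ⟨i, j, c⟩
  cases c <;> rfl

def sliceEmb (x : ZMod m × TVert r s t) : Diag m :=
  diagAt x.1 x.2.length x.2.colour

lemma PiSetAt_eq_range (i : ZMod m) :
    PiSetAt r s t i = Set.range (fun v : TVert r s t => sliceEmb (i, v)) := by
  ext d
  constructor
  · rintro (⟨k, hk2, hkr, rfl⟩ | ⟨k, hk2, hkr, rfl⟩ | ⟨k, hk2, hkr, rfl⟩)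
    · rcases eq_or_lt_of_le hkr with rfl | hk
      · exact ⟨.center, rfl⟩
      · refine ⟨.legA ⟨r + 1 - k, by omega⟩, ?_⟩
        simp [sliceEmb, diagAt, TVert.length, TVert.colour,
          Nat.sub_sub_self (by omega : k ≤ r + 1)]
    · refine ⟨.legB ⟨k - (r + 3), by omega⟩, ?_⟩
      simp [sliceEmb, diagAt, TVert.length, TVert.colour, Nat.add_sub_cancel' hk2]
    · refine ⟨.legC ⟨k - (r + 3), by omega⟩, ?_⟩
      simp [sliceEmb, diagAt, TVert.length, TVert.colour, Nat.add_sub_cancel' hk2]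
  · rintro ⟨v, rfl⟩
    cases v with
    | center => exact Or.inl ⟨r + 2, by omega, le_rfl, rfl⟩
    | legA a => exact Or.inl ⟨r + 1 - a, by omega, by omega, rfl⟩
    | legB b => exact Or.inr (Or.inl ⟨r + 3 + b, by omega, by omega, rfl⟩)
    | legC c => exact Or.inr (Or.inr ⟨r + 3 + c, by omega, by omega, rfl⟩)

lemma PiSet_eq_range :
    PiSet r s t m = Set.range (sliceEmb : ZMod m × TVert r s t → Diag m) := by
  ext
  simp [PiSet, PiSetAt_eq_range]

end Slices

section SymmetricSlices

variable {r t m : ℕ}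

lemma treeRhoPerm_apply (v : TVert r t t) : treeRhoPerm r t v = treeRho v := rfl

lemma treeRhoPerm_sq : treeRhoPerm r t ^ 2 = 1 :=
  Equiv.ext fun v => by cases v <;> rfl

lemma tArrow_treeRhoPerm_iff {u v : TVert r t t} :
    TArrow (treeRhoPerm r t u) (treeRhoPerm r t v) ↔ TArrow u v := by
  rw [treeRhoPerm_apply, treeRhoPerm_apply]
  cases u <;> cases v <;> simp [TArrow, treeRho]

lemma TVert.length_add_one_lt (hm : r + t + 3 < m) (v : TVert r t t) : v.length + 1 < m := by
  cases v <;> simp [TVert.length] <;> omega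

lemma sliceEmb_injective (hm : r + t + 3 < m) :
    Function.Injective (sliceEmb : ZMod m × TVert r t t → Diag m) := by
  rintro ⟨i, v⟩ ⟨j, w⟩ h
  obtain ⟨rfl, hl, hc⟩ : i = j ∧ (v.length : ZMod m) = w.length ∧ v.colour = w.colour :=
    diagAt_inj.1 h
  have hv := v.length_add_one_lt hm
  have hw := w.length_add_one_lt hm
  rw [ZMod.natCast_inj_of_lt (by omega) (by omega)] at hl
  rw [TVert.eq_of_length_colour hl hc]

lemma sliceEmb_mem_PiSetAt_iff (hm : r + t + 3 < m) {x : ZMod m × TVert r t t} {i : ZMod m} :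
    sliceEmb x ∈ PiSetAt r t t i ↔ x.1 = i := by
  rw [PiSetAt_eq_range]
  constructor
  · rintro ⟨v, hv⟩
    exact (congrArg Prod.fst (sliceEmb_injective hm hv)).symm
  · rintro rfl
    exact ⟨x.2, rfl⟩

lemma rot_sliceEmb_iff (hm : r + t + 3 < m) (x y : ZMod m × TVert r t t) :
    Rot r (sliceEmb x) (sliceEmb y) ↔
      (y.1 = x.1 ∧ TArrow x.2 y.2) ∨ (y.1 = x.1 + 1 ∧ TArrow y.2 x.2) := by
  have hx := x.2.length_add_one_lt hm
  have hy := y.2.length_add_one_lt hm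
  rw [sliceEmb, sliceEmb, rot_diagAt_iff, sliceStep_natCast_iff hx (by omega) (by omega),
    sliceStep_natCast_iff hy (by omega) (by omega), TVert.tArrow_iff_sliceStep,
    TVert.tArrow_iff_sliceStep]

lemma rho_sliceEmb (x : ZMod m × TVert r t t) :
    rho (sliceEmb x) = sliceEmb (x.1, treeRho x.2) := by
  obtain ⟨i, v⟩ := x
  cases v <;> rfl

lemma iterate_rho_sliceEmb (k : ℕ) (x : ZMod m × TVert r t t) :
    rho^[k] (sliceEmb x) = sliceEmb (x.1, (treeRhoPerm r t ^ k) x.2) := by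
  induction k with
  | zero => rfl
  | succ k ih =>
    rw [Function.iterate_succ_apply', ih, rho_sliceEmb, pow_succ', Perm.mul_apply,
      treeRhoPerm_apply]

lemma shiftD_sliceEmb (x : ZMod m × TVert r t t) :
    shiftD (sliceEmb x) = sliceEmb (x.1 - 1, x.2) :=
  shiftD_diagAt _ _ _

lemma tauD_sliceEmb (hm : r + t + 3 < m) (x : ZMod m × TVert r t t) :
    tauD r t t (sliceEmb x) = sliceEmb (sliceTau (treeRhoPerm r t ^ m) x) := by
  simp only [tauD, sliceTau, seamExp, sliceEmb_mem_PiSetAt_iff hm, true_and, sub_eq_zero]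
  split_ifs
  · rw [zpow_one, shiftD_sliceEmb, iterate_rho_sliceEmb]
  · rw [zpow_zero, shiftD_sliceEmb, Perm.one_apply]

lemma image_tauD_PiSetAt_one (hm : r + t + 3 < m) :
    tauD r t t '' PiSetAt r t t (1 : ZMod m) = PiSetAt r t t 0 := by
  have h : (tauD r t t ∘ fun v => sliceEmb ((1 : ZMod m), v)) =
      (fun v => sliceEmb ((0 : ZMod m), v)) ∘ (treeRhoPerm r t ^ m) := by
    funext v
    simp [tauD_sliceEmb hm, sliceTau, seamExp]
  rw [PiSetAt_eq_range, PiSetAt_eq_range, ← Set.range_comp, h, (Equiv.surjective _).range_comp]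

lemma seamTwist_sliceEmb_iff (hm : r + t + 3 < m) (x y : ZMod m × TVert r t t) :
    SeamTwist r t t m (sliceEmb x) (sliceEmb y) ↔ Odd m ∧ x.1 = 0 ∧ y.1 = 1 := by
  simp [SeamTwist, image_tauD_PiSetAt_one hm, sliceEmb_mem_PiSetAt_iff hm]

lemma arrowD_sliceEmb_iff (hm : r + t + 3 < m) (x y : ZMod m × TVert r t t) :
    ArrowD r t t m (sliceEmb x) (sliceEmb y) ↔ SliceArrow TArrow (treeRhoPerm r t ^ m) x y := by
  obtain ⟨i, v⟩ := x
  obtain ⟨j, w⟩ := y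
  have hρ (d : Diag m) : sliceEmb (j, w) = rho d ↔ d = sliceEmb (j, treeRho w) := by
    rw [eq_comm, rho_involutive.eq_iff, rho_sliceEmb]
  simp only [ArrowD, PiSet_eq_range, Set.mem_range_self, true_and, hρ, and_or_left, exists_or,
    exists_eq_right_right, exists_eq_right_right', seamTwist_sliceEmb_iff hm, rot_sliceEmb_iff hm]
  by_cases hS : Odd m ∧ i = 0 ∧ j = 1
  · obtain ⟨hodd, rfl, rfl⟩ := hS
    have : Fact (1 < m) := ⟨by omega⟩
    simp [hodd, SliceArrow, seamExp, hodd.pow_eq_self_of_sq_eq_one treeRhoPerm_sq,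
      treeRhoPerm_apply]
  · simp only [hS, and_false, false_or, not_false_eq_true, and_true]
    refine or_congr_right (and_congr_right fun hj => ?_)
    rw [seamExp]
    split_ifs with hi
    · subst hi
      have heven : Even m := Nat.not_odd_iff_even.1 fun ho => hS ⟨ho, rfl, by simpa using hj⟩
      rw [heven.pow_eq_one_of_sq_eq_one treeRhoPerm_sq, one_zpow, Perm.one_apply]
    · rw [zpow_zero, Perm.one_apply]

end SymmetricSlices

/-- Theorem 4.2, symmetric case. Let `r, t` be nonnegative
integers and `n ≥ r+t+1`, and let `ρ` also denote the automorphism of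
`ℤ T_{r,t,t}` induced by the order-two graph automorphism of `T_{r,t,t}`
exchanging its two legs of length `t`. Then there is an isomorphism of stable
translation quivers `Γ^{n+3}_{r,t,t} ≅ ℤ T_{r,t,t} / ⟨τ^{-(n+3)} ρ^{n+3}⟩`;
in particular the twist by `ρ` occurs exactly when the polygon has an odd
number of sides. -/
theorem gamma_iso_ZT_quotient_symmetric (r t n : ℕ) (hn : r + t + 1 ≤ n) :
    (∃ φ : ℤ × TVert r t t → Diag (n + 3),
      IsQuotientIso r t t (n + 3) TArrow
        (shiftPerm (n + 3) ((treeRhoPerm r t) ^ (n + 3))) φ) ∧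
    (Odd (n + 3) → (treeRhoPerm r t) ^ (n + 3) = treeRhoPerm r t) ∧
    (Even (n + 3) → (treeRhoPerm r t) ^ (n + 3) = 1) := by
  have hm : r + t + 3 < n + 3 := by omega
  have hm0 : 0 < n + 3 := by omega
  set σ := treeRhoPerm r t ^ (n + 3)
  have hσ (u v : TVert r t t) : TArrow (σ u) (σ v) ↔ TArrow u v := by
    have := rel_zpow_apply_iff (fun _ _ => tArrow_treeRhoPerm_iff) ((n + 3 : ℕ) : ℤ) u v
    rwa [zpow_natCast] at this
  refine ⟨⟨sliceEmb ∘ wrap (n + 3) σ, fun x => ?_, fun d hd => ?_, fun x y => ?_, fun x => ?_,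
    fun x y => ?_⟩, fun h => h.pow_eq_self_of_sq_eq_one treeRhoPerm_sq,
    fun h => h.pow_eq_one_of_sq_eq_one treeRhoPerm_sq⟩
  · exact PiSet_eq_range ▸ Set.mem_range_self _
  · rwa [PiSet_eq_range, ← (wrap_surjective hm0 σ).range_comp] at hd
  · exact (sliceEmb_injective hm).eq_iff.trans (wrap_eq_wrap_iff hm0 σ x y)
  · exact congrArg sliceEmb (wrap_zTau hm0 σ x) |>.trans (tauD_sliceEmb hm _).symm
  · exact (arrowD_sliceEmb_iff hm _ _).trans (sliceArrow_wrap_iff hm0 hσ x y)
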